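/- Let x ∈ 𝔷₄ satisfy x₁₃ ≠ x₃₁. Then there exist unipotent elements g₁, g₂ ∈ S₄,₂ (i.e., gᵢ − I₆ is nilpotent) such that g₁·x·g₂^τ = x and χ_{S₄,₂}(g₁)·χ_{S₄,₂}(g₂) ≠ 1. -/

import Mathlib

open Matrix

/-- Assembles a `3 × 3` grid of `2 × 2` blocks into a `6 × 6` matrix. -/
def asm {𝕂 : Type*} [RCLike 𝕂] (m : Matrix (Fin 3) (Fin 3) (Matrix (Fin 2) (Fin 2) 𝕂)) :
    Matrix (Fin 6) (Fin 6) 𝕂 :=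
  Matrix.of fun i j =>
    m ⟨(i : ℕ) / 2, by have := i.2; omega⟩ ⟨(j : ℕ) / 2, by have := j.2; omega⟩
      ⟨(i : ℕ) % 2, by omega⟩ ⟨(j : ℕ) % 2, by omega⟩

/-- The subgroup `S₄,₂ ⊆ GL₆(𝕂)` of matrices of the block form `[[a,b,0],[0,a,0],[0,0,a]]`
with `a ∈ GL₂(𝕂)` and `b ∈ gl₂(𝕂)`. -/
def S42 (𝕂 : Type*) [RCLike 𝕂] : Set (Matrix (Fin 6) (Fin 6) 𝕂) :=
  {s | ∃ a b : Matrix (Fin 2) (Fin 2) 𝕂, IsUnit a.det ∧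
    s = asm !![a, b, 0; 0, a, 0; 0, 0, a]}

/-- The set `𝔷₄` of invertible `6 × 6` matrices whose only possibly nonzero entries are
those in the upper left `3 × 3` corner except the `(3,3)` one, together with the
entries at (1-indexed) positions `(4,4)`, `(5,6)`, `(6,5)`, which are equal to `1`. -/
def z4set (𝕂 : Type*) [RCLike 𝕂] : Set (Matrix (Fin 6) (Fin 6) 𝕂) :=
  {x | IsUnit x.det ∧ x 2 2 = 0 ∧ x 3 3 = 1 ∧ x 4 5 = 1 ∧ x 5 4 = 1 ∧
    ∀ i j : Fin 6, x i j ≠ 0 →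
      ((i : ℕ) < 3 ∧ (j : ℕ) < 3) ∨ (i = 3 ∧ j = 3) ∨ (i = 4 ∧ j = 5) ∨ (i = 5 ∧ j = 4)}

/-- The `2 × 2` block of a `6 × 6` matrix at block position `(k, l)`. -/
def blk {𝕂 : Type*} [RCLike 𝕂] (k l : Fin 3) (s : Matrix (Fin 6) (Fin 6) 𝕂) :
    Matrix (Fin 2) (Fin 2) 𝕂 :=
  Matrix.of fun i j =>
    s ⟨2 * (k : ℕ) + (i : ℕ), by have := k.2; have := i.2; omega⟩
      ⟨2 * (l : ℕ) + (j : ℕ), by have := l.2; have := j.2; omega⟩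

open Classical in
/-- The character `χ_{S₄,₂}` of `S₄,₂`, built from a character `χ` of `𝕂ˣ` and an
additive character `ψ` of `𝕂`:  on `s = [[a,b,0],[0,a,0],[0,0,a]]` its value is
`χ(det a)·ψ(tr(b·a⁻¹))`. -/
noncomputable def chiS42 {𝕂 : Type*} [RCLike 𝕂] (χ : 𝕂ˣ →* ℂˣ) (ψ : 𝕂 → ℂ)
    (s : Matrix (Fin 6) (Fin 6) 𝕂) : ℂ :=
  if h : IsUnit (blk 0 0 s).det then
    (χ h.unit : ℂ) * ψ (Matrix.trace (blk 0 1 s * (blk 0 0 s)⁻¹))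
  else 0

/-!
Let `c` and `r` be the third column and third row of `x`. The zero pattern of `𝔷₄` puts both
on the first two coordinates, and `x₃₃ = 0`. So the rank-one unipotents `g₁ = 1 + t c e₃ᵀ` and
`g₂ = 1 - t rᵀ e₃ᵀ` lie in `S₄,₂` (with `a = 1`), and
`g₁ x g₂ᵀ = x + t c r - t c r - t² x₃₃ c r = x`. Their characters are `ψ(t x₁₃)` and
`ψ(-t x₃₁)`, with product `ψ(t (x₁₃ - x₃₁))`, which is `≠ 1` for a suitable `t`.
-/

namespace Matrix

variable {n R : Type*} [Fintype n] [DecidableEq n] [CommRing R]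

theorem isNilpotent_vecMulVec_single_one {u : n → R} {i : n} (hu : u i = 0) :
    IsNilpotent (vecMulVec u (Pi.single i 1)) :=
  ⟨2, by rw [pow_two, vecMulVec_mul_vecMulVec, single_one_dotProduct, hu, zero_smul,
    vecMulVec_zero]⟩

theorem one_add_vecMulVec_mul_mul_transpose_eq_self {x : Matrix n n R} {i : n}
    (hx : x i i = 0) (t : R) :
    (1 + vecMulVec (t • x.col i) (Pi.single i 1)) * x *
      (1 + vecMulVec (-t • x.row i) (Pi.single i 1))ᵀ = x := by
  have hcorner : x.row i ⬝ᵥ Pi.single i 1 = 0 := by rw [dotProduct_single_one, row_apply, hx]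
  rw [transpose_add, transpose_one, transpose_vecMulVec, add_mul, one_mul, vecMulVec_mul,
    single_one_vecMul, mul_add, mul_one, add_mul, mul_vecMulVec, mulVec_single_one,
    vecMulVec_mul_vecMulVec, hcorner, zero_smul, vecMulVec_zero, add_zero, vecMulVec_smul,
    smul_vecMulVec, neg_smul, add_neg_cancel_right]

end Matrix

section S42

variable {𝕂 : Type*} [RCLike 𝕂]

def transvectionS42 (p q : 𝕂) : Matrix (Fin 6) (Fin 6) 𝕂 :=
  asm !![1, !![p, 0; q, 0], 0; 0, 1, 0; 0, 0, 1]

theorem transvectionS42_mem (p q : 𝕂) : transvectionS42 p q ∈ S42 𝕂 :=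
  ⟨1, !![p, 0; q, 0], by simp, rfl⟩

theorem transvectionS42_eq (p q : 𝕂) :
    transvectionS42 p q = 1 + vecMulVec ![p, q, 0, 0, 0, 0] (Pi.single 2 1) := by
  have h : transvectionS42 p q = !![1, 0, p, 0, 0, 0; 0, 1, q, 0, 0, 0; 0, 0, 1, 0, 0, 0;
      0, 0, 0, 1, 0, 0; 0, 0, 0, 0, 1, 0; 0, 0, 0, 0, 0, 1] := by
    ext i j; fin_cases i <;> fin_cases j <;> rfl
  rw [h]
  ext i j
  rw [Matrix.add_apply, vecMulVec_apply, one_apply]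
  fin_cases i <;> fin_cases j <;> simp

theorem isNilpotent_transvectionS42_sub_one (p q : 𝕂) :
    IsNilpotent (transvectionS42 p q - 1) := by
  rw [transvectionS42_eq, add_sub_cancel_left]
  exact isNilpotent_vecMulVec_single_one rfl

theorem chiS42_transvectionS42 (χ : 𝕂ˣ →* ℂˣ) (ψ : 𝕂 → ℂ) (p q : 𝕂) :
    chiS42 χ ψ (transvectionS42 p q) = ψ p := by
  have h00 : blk 0 0 (transvectionS42 p q) = 1 := by
    ext i j; fin_cases i <;> fin_cases j <;> rfl
  have h01 : blk 0 1 (transvectionS42 p q) = !![p, 0; q, 0] := by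
    ext i j; fin_cases i <;> fin_cases j <;> rfl
  rw [chiS42, h00, h01, dif_pos (by simp)]
  simp [trace_fin_two]

theorem col_two_of_mem_z4set {x : Matrix (Fin 6) (Fin 6) 𝕂} (hx : x ∈ z4set 𝕂) :
    x.col 2 = ![x 0 2, x 1 2, 0, 0, 0, 0] := by
  obtain ⟨-, h22, -, -, -, hz⟩ := hx
  ext k
  fin_cases k
  all_goals first | rfl | exact h22 | (by_contra h; simpa using hz _ _ h)

theorem row_two_of_mem_z4set {x : Matrix (Fin 6) (Fin 6) 𝕂} (hx : x ∈ z4set 𝕂) :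
    x.row 2 = ![x 2 0, x 2 1, 0, 0, 0, 0] := by
  obtain ⟨-, h22, -, -, -, hz⟩ := hx
  ext k
  fin_cases k
  all_goals first | rfl | exact h22 | (by_contra h; simpa using hz _ _ h)

end S42

theorem z4_unipotent_incompatibility {𝕂 : Type*} [RCLike 𝕂]
    (ψ : 𝕂 → ℂ) (hψ_add : ∀ s t, ψ (s + t) = ψ s * ψ t)
    (hψ_nontriv : ∃ t, ψ t ≠ 1)
    (χ : 𝕂ˣ →* ℂˣ)
    (x : Matrix (Fin 6) (Fin 6) 𝕂) (hx : x ∈ z4set 𝕂) (hne : x 0 2 ≠ x 2 0) :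
    ∃ g₁ ∈ S42 𝕂, ∃ g₂ ∈ S42 𝕂, IsNilpotent (g₁ - 1) ∧ IsNilpotent (g₂ - 1) ∧
      g₁ * x * g₂ᵀ = x ∧ chiS42 χ ψ g₁ * chiS42 χ ψ g₂ ≠ 1 := by
  obtain ⟨t₀, ht₀⟩ := hψ_nontriv
  set t := t₀ / (x 0 2 - x 2 0)
  refine ⟨transvectionS42 (t * x 0 2) (t * x 1 2), transvectionS42_mem _ _,
    transvectionS42 (-t * x 2 0) (-t * x 2 1), transvectionS42_mem _ _,
    isNilpotent_transvectionS42_sub_one _ _, isNilpotent_transvectionS42_sub_one _ _, ?_, ?_⟩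
  · have h := one_add_vecMulVec_mul_mul_transpose_eq_self hx.2.1 t
    rw [col_two_of_mem_z4set hx, row_two_of_mem_z4set hx] at h
    simp only [smul_cons, smul_eq_mul, mul_zero, smul_empty, ← transvectionS42_eq] at h
    exact h
  · rw [chiS42_transvectionS42, chiS42_transvectionS42, ← hψ_add]
    convert ht₀ using 2
    rw [neg_mul, ← sub_eq_add_neg, ← mul_sub]
    exact div_mul_cancel₀ _ (sub_ne_zero.mpr hne)
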